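/- Let (𝒳, T) be a dynamical system (𝒳 compact metric, T : 𝒳 → 𝒳 continuous) with metric d. For every natural number n, every ε > 0 and every L > 1: (1/n) log #(𝒳, d_n, 2Lε) ≤ log 2 + (1/L) log #(𝒳, d, ε) + (1/n) log #(𝒳, d̄_n, ε), where d_n(x,y) = max_{0≤k<n} d(T^k x, T^k y) and d̄_n(x,y) = (1/n) Σ_{k=0}^{n-1} d(T^k x, T^k y). -/

import Mathlib

/-!
Fix finite open covers of `𝒳` by `M` sets of `d̄_n`-diameter `< ε` and `K` sets of
`d`-diameter `< ε`, and a base point `b` in each member of the first. If `d̄_n(b, x) < ε`, then by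
Markov's inequality the set `S` of times `k < n` with `d(Tᵏ b, Tᵏ x) ≥ Lε` has at most `n / L`
elements. The `d̄_n`-set, the set `S` (at most `2ⁿ` choices) and, for each `k ∈ S`, a `d`-set
containing `Tᵏ x` (at most `K^⌊n/L⌋` choices) determine an open set of `d_n`-diameter `< 2Lε`
containing `x`. Hence `#(𝒳, d_n, 2Lε) ≤ M · 2ⁿ · K^⌊n/L⌋`, and the inequality follows by taking
logarithms.
-/

open Real Filter Set Topology
open scoped NNReal

/-- Minimal cardinality of a cover of `𝒳` by open sets of `ρ`-diameter less than `ε`. -/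
noncomputable def coverNum (𝒳 : Type*) [TopologicalSpace 𝒳] (ρ : 𝒳 → 𝒳 → ℝ) (ε : ℝ) : ℕ :=
  sInf {N : ℕ | ∃ U : Fin N → Set 𝒳, (∀ i, IsOpen (U i)) ∧ (∀ x, ∃ i, x ∈ U i) ∧
    ∀ i, ∀ x ∈ U i, ∀ y ∈ U i, ρ x y < ε}

/-- `d_n(x,y) = max_{0 ≤ k < n} d(T^k x, T^k y)`. -/
noncomputable def bowenMax {𝒳 : Type*} [PseudoMetricSpace 𝒳] (T : 𝒳 → 𝒳) (n : ℕ)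
    (x y : 𝒳) : ℝ :=
  (((Finset.range n).sup fun k => nndist (T^[k] x) (T^[k] y)) : ℝ≥0)

/-- `d̄_n(x,y) = (1/n) Σ_{k=0}^{n-1} d(T^k x, T^k y)`. -/
noncomputable def bowenAvg {𝒳 : Type*} [PseudoMetricSpace 𝒳] (T : 𝒳 → 𝒳) (n : ℕ)
    (x y : 𝒳) : ℝ :=
  (∑ k ∈ Finset.range n, dist (T^[k] x) (T^[k] y)) / n

section

variable {𝒳 ι κ : Type*}

section Cover

variable [TopologicalSpace 𝒳] {ρ : 𝒳 → 𝒳 → ℝ} {ε : ℝ}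

def IsSmallOpenCover (ρ : 𝒳 → 𝒳 → ℝ) (ε : ℝ) (U : ι → Set 𝒳) : Prop :=
  (∀ i, IsOpen (U i)) ∧ (∀ x, ∃ i, x ∈ U i) ∧ ∀ i, ∀ x ∈ U i, ∀ y ∈ U i, ρ x y < ε

theorem IsSmallOpenCover.comp_equiv {U : ι → Set 𝒳} (hU : IsSmallOpenCover ρ ε U) (e : κ ≃ ι) :
    IsSmallOpenCover ρ ε (U ∘ e) := by
  refine ⟨fun j => hU.1 (e j), fun x => ?_, fun j => hU.2.2 (e j)⟩
  obtain ⟨i, hi⟩ := hU.2.1 x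
  exact ⟨e.symm i, by simpa using hi⟩

theorem coverNum_le_card [Fintype ι] {U : ι → Set 𝒳} (hU : IsSmallOpenCover ρ ε U) :
    coverNum 𝒳 ρ ε ≤ Fintype.card ι :=
  Nat.sInf_le ⟨_, hU.comp_equiv (Fintype.equivFin ι).symm⟩

theorem IsSmallOpenCover.exists_fin_coverNum [Finite ι] {U : ι → Set 𝒳}
    (hU : IsSmallOpenCover ρ ε U) :
    ∃ V : Fin (coverNum 𝒳 ρ ε) → Set 𝒳, IsSmallOpenCover ρ ε V :=
  Nat.sInf_mem (s := {N | ∃ V : Fin N → Set 𝒳, IsSmallOpenCover ρ ε V})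
    ⟨_, _, hU.comp_equiv (Finite.equivFin ι).symm⟩

theorem coverNum_of_isEmpty [IsEmpty 𝒳] : coverNum 𝒳 ρ ε = 0 :=
  Nat.sInf_eq_zero.2 <| Or.inl
    ⟨Fin.elim0, fun i => i.elim0, fun x => isEmptyElim x, fun i => i.elim0⟩

theorem exists_finset_isSmallOpenCover [CompactSpace 𝒳]
    (hρ : Continuous fun p : 𝒳 × 𝒳 => ρ p.1 p.2) (hε : ∀ x, ρ x x < ε) :
    ∃ (t : Finset 𝒳) (U : t → Set 𝒳), IsSmallOpenCover ρ ε U := by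
  have hW : ∀ x, ∃ W : Set 𝒳, IsOpen W ∧ x ∈ W ∧ W ×ˢ W ⊆ {p | ρ p.1 p.2 < ε} := by
    intro x
    obtain ⟨u, v, hu, hv, hxu, hxv, huv⟩ :=
      isOpen_prod_iff.1 (isOpen_lt hρ continuous_const) x x (hε x)
    exact ⟨u ∩ v, hu.inter hv, ⟨hxu, hxv⟩,
      (prod_mono inter_subset_left inter_subset_right).trans huv⟩
  choose W hWo hxW hWsmall using hW
  obtain ⟨t, ht⟩ := isCompact_univ.elim_finite_subcover W hWo fun x _ => mem_iUnion.2 ⟨x, hxW x⟩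
  refine ⟨t, fun a => W a, fun a => hWo a, fun x => ?_,
    fun a y hy z hz => hWsmall a (mk_mem_prod hy hz)⟩
  obtain ⟨a, ha, hxa⟩ := mem_iUnion₂.1 (ht (mem_univ x))
  exact ⟨⟨a, ha⟩, hxa⟩

theorem exists_fin_coverNum_isSmallOpenCover [CompactSpace 𝒳]
    (hρ : Continuous fun p : 𝒳 × 𝒳 => ρ p.1 p.2) (hε : ∀ x, ρ x x < ε) :
    ∃ V : Fin (coverNum 𝒳 ρ ε) → Set 𝒳, IsSmallOpenCover ρ ε V := by
  obtain ⟨t, U, hU⟩ := exists_finset_isSmallOpenCover hρ hε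
  exact hU.exists_fin_coverNum

theorem IsSmallOpenCover.nonempty_index [Nonempty 𝒳] {U : ι → Set 𝒳}
    (hU : IsSmallOpenCover ρ ε U) : Nonempty ι :=
  ⟨(hU.2.1 (Classical.arbitrary 𝒳)).choose⟩

end Cover

theorem Finset.card_filter_mul_le_sum {α R : Type*} [Semiring R] [LinearOrder R]
    [IsOrderedRing R] (s : Finset α) (f : α → R) (hf : ∀ i ∈ s, 0 ≤ f i) (t : R) :
    ((s.filter (t ≤ f ·)).card : R) * t ≤ ∑ i ∈ s, f i :=
  calc ((s.filter (t ≤ f ·)).card : R) * t = (s.filter (t ≤ f ·)).card • t :=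
        (nsmul_eq_mul _ _).symm
    _ ≤ ∑ i ∈ s.filter (t ≤ f ·), f i :=
      Finset.card_nsmul_le_sum _ _ _ fun _ hi => (Finset.mem_filter.1 hi).2
    _ ≤ ∑ i ∈ s, f i :=
      Finset.sum_le_sum_of_subset_of_nonneg (Finset.filter_subset _ _) fun i hi _ => hf i hi

theorem Fintype.card_sigma_powerset_fun_le {α : Type*} [DecidableEq α] [Fintype ι] (s : Finset α)
    (m : ℕ) (hι : 0 < Fintype.card ι) :
    Fintype.card (Σ S : (s.powerset.filter (·.card ≤ m)), (S.1 → ι))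
      ≤ 2 ^ s.card * Fintype.card ι ^ m := by
  rw [Fintype.card_sigma]
  calc ∑ S : (s.powerset.filter (·.card ≤ m)), Fintype.card (S.1 → ι)
      ≤ ∑ _S : (s.powerset.filter (·.card ≤ m)), Fintype.card ι ^ m := by
        refine Finset.sum_le_sum fun S _ => ?_
        rw [Fintype.card_fun, Fintype.card_coe]
        exact Nat.pow_le_pow_right hι (Finset.mem_filter.1 S.2).2
    _ ≤ 2 ^ s.card * Fintype.card ι ^ m := by
        rw [Finset.sum_const, Finset.card_univ, Fintype.card_coe, smul_eq_mul,
          ← Finset.card_powerset]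
        exact Nat.mul_le_mul_right _ (Finset.card_filter_le _ _)

section Bowen

variable [PseudoMetricSpace 𝒳] {T : 𝒳 → 𝒳} {n : ℕ}

theorem bowenMax_lt_iff {x y : 𝒳} {c : ℝ} (hc : 0 < c) :
    bowenMax T n x y < c ↔ ∀ k < n, dist (T^[k] x) (T^[k] y) < c := by
  lift c to ℝ≥0 using hc.le
  rw [bowenMax, NNReal.coe_lt_coe, Finset.sup_lt_iff (by exact_mod_cast hc)]
  simp only [Finset.mem_range, ← NNReal.coe_lt_coe, coe_nndist]

theorem continuous_bowenAvg (hT : Continuous T) (n : ℕ) :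
    Continuous fun p : 𝒳 × 𝒳 => bowenAvg T n p.1 p.2 :=
  (continuous_finsetSum _ fun k _ =>
    ((hT.iterate k).comp continuous_fst).dist ((hT.iterate k).comp continuous_snd)).div_const _

theorem sum_dist_iterate_le_of_bowenAvg_le {x y : 𝒳} {ε : ℝ} (h : bowenAvg T n x y ≤ ε) :
    ∑ k ∈ Finset.range n, dist (T^[k] x) (T^[k] y) ≤ n * ε := by
  rcases n.eq_zero_or_pos with rfl | hn
  · simp
  rwa [bowenAvg, div_le_iff₀ (by positivity), mul_comm] at h

def bowenCell (T : 𝒳 → 𝒳) (n : ℕ) (V : ι → Set 𝒳) (r : ℝ) (b : 𝒳) (S : Finset ℕ)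
    (f : S → ι) : Set 𝒳 :=
  {x | (∀ k : S, T^[k] x ∈ V (f k)) ∧ ∀ k ∈ Finset.range n \ S, dist (T^[k] b) (T^[k] x) < r}

variable {V : ι → Set 𝒳} {r : ℝ} {b : 𝒳} {S : Finset ℕ} {f : S → ι}

theorem isOpen_bowenCell (hT : Continuous T) (hV : ∀ i, IsOpen (V i)) :
    IsOpen (bowenCell T n V r b S f) := by
  simp only [bowenCell, ofPred_and, ofPred_forall]
  exact (isOpen_iInter_of_finite fun k => (hV _).preimage (hT.iterate _)).inter
    (isOpen_biInter_finset fun k _ => isOpen_lt (continuous_const.dist (hT.iterate k))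
      continuous_const)

theorem bowenMax_lt_of_mem_bowenCell {ε : ℝ} (hV : ∀ i, ∀ x ∈ V i, ∀ y ∈ V i, dist x y < ε)
    (hr : 0 < r) (hεr : ε ≤ 2 * r) {x y : 𝒳} (hx : x ∈ bowenCell T n V r b S f)
    (hy : y ∈ bowenCell T n V r b S f) : bowenMax T n x y < 2 * r := by
  refine (bowenMax_lt_iff (by positivity)).2 fun k hk => ?_
  by_cases hkS : k ∈ S
  · exact (hV _ _ (hx.1 ⟨k, hkS⟩) _ (hy.1 ⟨k, hkS⟩)).trans_le hεr
  · have hk' : k ∈ Finset.range n \ S := Finset.mem_sdiff.2 ⟨Finset.mem_range.2 hk, hkS⟩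
    have hbx := hx.2 k hk'
    have hby := hy.2 k hk'
    calc dist (T^[k] x) (T^[k] y) ≤ dist (T^[k] b) (T^[k] x) + dist (T^[k] b) (T^[k] y) :=
          dist_triangle_left _ _ _
      _ < 2 * r := by linarith

theorem exists_mem_bowenCell (hV : ∀ y, ∃ i, y ∈ V i) {ε L : ℝ} (hε : 0 < ε) (hL : 0 < L)
    {x : 𝒳} (hbx : bowenAvg T n b x ≤ ε) :
    ∃ S ∈ (Finset.range n).powerset.filter (·.card ≤ ⌊n / L⌋₊), ∃ f : S → ι,
      x ∈ bowenCell T n V (L * ε) b S f := by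
  classical
  choose g hg using hV
  set S := (Finset.range n).filter fun k => L * ε ≤ dist (T^[k] b) (T^[k] x)
  have hS : (S.card : ℝ) * (L * ε) ≤ n * ε :=
    (Finset.card_filter_mul_le_sum _ _ (fun _ _ => dist_nonneg) _).trans
      (sum_dist_iterate_le_of_bowenAvg_le hbx)
  have hScard : S.card ≤ ⌊n / L⌋₊ := by
    refine Nat.le_floor ((le_div_iff₀ hL).2 (le_of_mul_le_mul_right ?_ hε))
    linarith
  refine ⟨S, Finset.mem_filter.2 ⟨Finset.mem_powerset.2 (Finset.filter_subset _ _), hScard⟩,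
    fun k => g (T^[k] x), fun k => hg _, fun k hk => ?_⟩
  obtain ⟨hkn, hkS⟩ := Finset.mem_sdiff.1 hk
  exact not_le.1 fun h => hkS (Finset.mem_filter.2 ⟨hkn, h⟩)

end Bowen

theorem coverNum_bowenMax_le_card_mul [PseudoMetricSpace 𝒳] [Nonempty 𝒳] [Fintype ι]
    [Fintype κ] {T : 𝒳 → 𝒳} (hT : Continuous T) {n : ℕ} {ε L : ℝ} {V : ι → Set 𝒳}
    {A : κ → Set 𝒳} (hV : IsSmallOpenCover dist ε V) (hA : IsSmallOpenCover (bowenAvg T n) ε A)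
    (hε : 0 < ε) (hL : 1 ≤ 2 * L) :
    coverNum 𝒳 (bowenMax T n) (2 * L * ε)
      ≤ Fintype.card κ * (2 ^ n * Fintype.card ι ^ ⌊n / L⌋₊) := by
  have hbase : ∀ j, ∃ b, ∀ x ∈ A j, b ∈ A j := fun j => by
    by_cases h : (A j).Nonempty
    exacts [⟨h.some, fun _ _ => h.some_mem⟩,
      ⟨Classical.arbitrary 𝒳, fun x hx => (h ⟨x, hx⟩).elim⟩]
  choose b hb using hbase
  let 𝒮 := (Finset.range n).powerset.filter (·.card ≤ ⌊n / L⌋₊)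
  have hcover : IsSmallOpenCover (bowenMax T n) (2 * L * ε)
      fun p : κ × Σ S : 𝒮, (S.1 → ι) => A p.1 ∩ bowenCell T n V (L * ε) (b p.1) p.2.1 p.2.2 := by
    refine ⟨fun p => (hA.1 _).inter (isOpen_bowenCell hT hV.1), fun x => ?_,
      fun p x hx y hy => ?_⟩
    · obtain ⟨j, hj⟩ := hA.2.1 x
      obtain ⟨S, hS, f, hf⟩ :=
        exists_mem_bowenCell hV.2.1 hε (by linarith) (hA.2.2 j _ (hb j x hj) x hj).le
      exact ⟨⟨j, ⟨S, hS⟩, f⟩, hj, hf⟩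
    · rw [mul_assoc]
      exact bowenMax_lt_of_mem_bowenCell hV.2.2 (by nlinarith) (by nlinarith) hx.2 hy.2
  calc coverNum 𝒳 (bowenMax T n) (2 * L * ε) ≤ _ := coverNum_le_card hcover
    _ ≤ _ := by
      rw [Fintype.card_prod]
      gcongr
      simpa using Fintype.card_sigma_powerset_fun_le (Finset.range n) ⌊n / L⌋₊
        (Fintype.card_pos_iff.2 hV.nonempty_index)

theorem one_div_mul_log_le_of_le_mul_pow {N M K n m : ℕ} {L : ℝ} (hn : 0 < n) (hM : 0 < M)
    (hK : 0 < K) (hm : (m : ℝ) ≤ n / L) (h : N ≤ M * (2 ^ n * K ^ m)) :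
    1 / n * log N ≤ log 2 + 1 / L * log K + 1 / n * log M := by
  have hlog : log N ≤ log M + (n * log 2 + m * log K) := by
    rcases N.eq_zero_or_pos with rfl | hN
    · have := Real.log_natCast_nonneg M
      have := Real.log_natCast_nonneg K
      simp only [Nat.cast_zero, log_zero]
      positivity
    calc log N ≤ log ((M * (2 ^ n * K ^ m) : ℕ) : ℝ) :=
          log_le_log (by exact_mod_cast hN) (by exact_mod_cast h)
      _ = log M + (n * log 2 + m * log K) := by
          push_cast
          rw [log_mul (by positivity) (by positivity), log_mul (by positivity) (by positivity),
            log_pow, log_pow]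
  have hn' : (0 : ℝ) < n := by exact_mod_cast hn
  have hmn : (m : ℝ) / n ≤ 1 / L := by rwa [div_le_iff₀ hn', one_div_mul_eq_div]
  calc 1 / n * log N ≤ 1 / n * (log M + (n * log 2 + m * log K)) := by gcongr
    _ = log 2 + m / n * log K + 1 / n * log M := by field_simp; ring
    _ ≤ log 2 + 1 / L * log K + 1 / n * log M := by gcongr

end

/-- For a dynamical system `(𝒳, T)` on a compact metric space, every `n ≥ 1`, `ε > 0`,
`L > 1`: `(1/n) log #(𝒳, d_n, 2Lε) ≤ log 2 + (1/L) log #(𝒳, d, ε) + (1/n) log #(𝒳, d̄_n, ε)`. -/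
theorem coverNum_bowenMax_le {𝒳 : Type*} [MetricSpace 𝒳] [CompactSpace 𝒳]
    (T : 𝒳 → 𝒳) (hT : Continuous T) (n : ℕ) (hn : 0 < n) (ε L : ℝ) (hε : 0 < ε) (hL : 1 < L) :
    (1 / n) * Real.log (coverNum 𝒳 (bowenMax T n) (2 * L * ε))
      ≤ Real.log 2 + (1 / L) * Real.log (coverNum 𝒳 dist ε)
        + (1 / n) * Real.log (coverNum 𝒳 (bowenAvg T n) ε) := by
  rcases isEmpty_or_nonempty 𝒳 with h𝒳 | h𝒳
  · simp only [coverNum_of_isEmpty, Nat.cast_zero, log_zero, mul_zero, add_zero]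
    positivity
  obtain ⟨V, hV⟩ := exists_fin_coverNum_isSmallOpenCover (ρ := (dist : 𝒳 → 𝒳 → ℝ))
    continuous_dist fun x => by simpa using hε
  obtain ⟨A, hA⟩ := exists_fin_coverNum_isSmallOpenCover (continuous_bowenAvg hT n)
    fun x => by simpa [bowenAvg] using hε
  have hcount := coverNum_bowenMax_le_card_mul hT hV hA hε (by linarith)
  rw [Fintype.card_fin, Fintype.card_fin] at hcount
  exact one_div_mul_log_le_of_le_mul_pow hn (Fin.pos_iff_nonempty.2 hA.nonempty_index)
    (Fin.pos_iff_nonempty.2 hV.nonempty_index) (Nat.floor_le (by positivity)) hcount
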